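/- Let V be a finite set of n nodes and P = (p_1, …, p_m) a consistent set of monitoring paths all having the same final node r, with each path of length at most d_max (number of nodes). Let z(k) = max{0, 2k−1}. If d_max ≥ ⌈log_2 m⌉ + 1, then the number of identifiable nodes is at most min{z(m), n} = min{2m−1, n}. If 2 ≤ d_max < ⌈log_2 m⌉ + 1, then the number of identifiable nodes is at most min{n, 1 + ⌊m / 2^{d_max−2}⌋ · z(2^{d_max−2}) + z(m mod 2^{d_max−2})}. -/

import Mathlib

/-! Because all paths end at `r` and are consistent, a node `w` lying after `v` on some path lies
on the segment from `v` to `r` of every path through `v`; so encodings are nested or disjoint, and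
the encodings of the identifiable nodes form a laminar family of distinct nonempty subsets of the
`m` paths. Apart from the full set, every path `i` lies in at most `d_max − 1` of them, since the
nodes whose encodings contain `i` are nodes of `p_i` other than `r`.

Splitting a laminar family of nonempty proper subsets of an `n`-set along its (disjoint) maximal
members and recursing gives the bound `2n − max 2 ⌈n / 2^(d−1)⌉` when every point lies in at most
`d` members. The recursion closes because `s ↦ 2s − ⌈s/q⌉`, the largest size of a forest of full
binary trees with `s` leaves and at most `q` leaves per tree, is superadditive, and
`⌊m/q⌋·z(q) + z(m mod q) = 2m − ⌈m/q⌉`. -/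

/-- The contiguous segment of the list `l` between (the first occurrences of) the
nodes `u` and `w`, inclusive, taken in the order of `l`. -/
def seg {V : Type*} [DecidableEq V] (l : List V) (u w : V) : List V :=
  (l.drop (min (l.idxOf u) (l.idxOf w))).take
    (max (l.idxOf u) (l.idxOf w) - min (l.idxOf u) (l.idxOf w) + 1)

/-- Two paths are consistent if, for any two nodes `u, w` appearing on both, the
contiguous segment of one between `u` and `w` equals, up to reversal, the
contiguous segment of the other between `u` and `w`. -/
def ConsistentPair {V : Type*} [DecidableEq V] (l l' : List V) : Prop :=
  ∀ u w : V, u ∈ l → w ∈ l → u ∈ l' → w ∈ l' →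
    seg l u w = seg l' u w ∨ seg l u w = (seg l' u w).reverse

/-- A family of paths is consistent if every two of its paths are consistent. -/
def Consistent {V : Type*} [DecidableEq V] {ι : Type*} (p : ι → List V) : Prop :=
  ∀ i j, ConsistentPair (p i) (p j)

/-- The encoding of a node `v` w.r.t. monitoring paths `p`. -/
def encoding {V : Type*} [DecidableEq V] {m : ℕ} (p : Fin m → List V) (v : V) :
    Finset (Fin m) :=
  Finset.univ.filter fun i => v ∈ p i

/-- A node is identifiable iff its encoding is nonempty and distinct from the
encoding of every other node. -/
def Identifiable {V : Type*} [DecidableEq V] {m : ℕ} (p : Fin m → List V) (v : V) :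
    Prop :=
  encoding p v ≠ ∅ ∧ ∀ w : V, w ≠ v → encoding p w ≠ encoding p v

/-- `z k = max {0, 2k − 1}`, the number of nodes of a full binary tree with `k`
leaves (natural subtraction realizes the `max` with `0`). -/
def z (k : ℕ) : ℕ := 2 * k - 1


open Finset

namespace Nat

theorem ceilDiv_add_le (a b q : ℕ) : (a + b) ⌈/⌉ q ≤ a ⌈/⌉ q + b ⌈/⌉ q := by
  rcases q.eq_zero_or_pos with rfl | hq
  · simp
  rw [ceilDiv_le_iff_le_mul hq, mul_add]
  exact add_le_add (le_smul_ceilDiv hq) (le_smul_ceilDiv hq)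

theorem ceilDiv_le_self (a : ℕ) {q : ℕ} (hq : 0 < q) : a ⌈/⌉ q ≤ a :=
  (ceilDiv_le_iff_le_mul hq).2 (Nat.le_mul_of_pos_left a hq)

theorem ceilDiv_pos {a q : ℕ} (hq : 0 < q) (ha : 0 < a) : 0 < a ⌈/⌉ q := by
  by_contra! h
  have := (ceilDiv_le_iff_le_mul hq).1 h
  omega

theorem two_mul_ceilDiv_le (a : ℕ) {q : ℕ} (hq : 0 < q) :
    2 * (a ⌈/⌉ q) ≤ 2 * a ⌈/⌉ q + 1 := by
  by_contra! h
  have h₂ : 2 * a ≤ q * (2 * (a ⌈/⌉ q - 1)) := (ceilDiv_le_iff_le_mul hq).1 (by omega)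
  have h₁ : a ⌈/⌉ q ≤ a ⌈/⌉ q - 1 :=
    (ceilDiv_le_iff_le_mul hq).2 (by linarith [mul_left_comm q 2 (a ⌈/⌉ q - 1)])
  omega

theorem mul_ceilDiv_mul_left (a : ℕ) {k q : ℕ} (hk : 0 < k) :
    k * a ⌈/⌉ (k * q) = a ⌈/⌉ q := by
  rcases q.eq_zero_or_pos with rfl | hq
  · simp
  refine eq_of_forall_ge_iff fun c => ?_
  rw [ceilDiv_le_iff_le_mul hq, ceilDiv_le_iff_le_mul (Nat.mul_pos hk hq), mul_assoc,
    Nat.mul_le_mul_left_iff hk]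

theorem ceilDiv_eq_div_add_ite (n : ℕ) {q : ℕ} (hq : 0 < q) :
    n ⌈/⌉ q = n / q + if n % q = 0 then 0 else 1 := by
  obtain ⟨a, r, hr, rfl⟩ : ∃ a r, r < q ∧ n = r + q * a :=
    ⟨n / q, n % q, Nat.mod_lt n hq, (Nat.mod_add_div n q).symm⟩
  rw [ceilDiv_eq_add_pred_div, show r + q * a + q - 1 = r + q - 1 + q * a by omega,
    Nat.add_mul_div_left _ _ hq, Nat.add_mul_div_left _ _ hq, Nat.add_mul_mod_self_left,
    Nat.div_eq_of_lt hr, Nat.mod_eq_of_lt hr, zero_add, add_comm]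
  split_ifs with h
  · rw [Nat.div_eq_of_lt (by omega)]
  · rw [Nat.div_eq_of_lt_le (k := 1) (by omega) (by omega)]

end Nat

theorem div_mul_z_add_z_mod (n : ℕ) {q : ℕ} (hq : 0 < q) :
    n / q * z q + z (n % q) = 2 * n - n ⌈/⌉ q := by
  have hdiv : q * (n / q) + n % q = n := Nat.div_add_mod n q
  have hmul : n / q * (2 * q - 1) = 2 * (q * (n / q)) - n / q := by
    rw [Nat.mul_sub, mul_one]; ring_nf
  have hle : n / q ≤ q * (n / q) := Nat.le_mul_of_pos_left _ hq
  rw [Nat.ceilDiv_eq_div_add_ite n hq, z, z, hmul]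
  split_ifs <;> omega

/-- For `d ≥ 1` this is `min (2n − 2) (2n − ⌈n / 2^(d−1)⌉)`; writing `⌈2n / 2^d⌉` makes the case
`d = 0` come out as `0`. -/
def laminarBound (d n : ℕ) : ℕ := 2 * n - max 2 (2 * n ⌈/⌉ 2 ^ d)

theorem laminarBound_le (d n : ℕ) : laminarBound d n ≤ 2 * n - 2 :=
  Nat.sub_le_sub_left (le_max_left _ _) _

theorem laminarBound_succ (d n : ℕ) :
    laminarBound (d + 1) n = 2 * n - max 2 (n ⌈/⌉ 2 ^ d) := by
  rw [laminarBound, pow_succ', Nat.mul_ceilDiv_mul_left _ two_pos]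

theorem one_add_laminarBound_add_ceilDiv_le (d : ℕ) {s : ℕ} (hs : 0 < s) :
    1 + laminarBound d s + s ⌈/⌉ 2 ^ d ≤ 2 * s := by
  have hq : 0 < 2 ^ d := Nat.two_pow_pos d
  have h₁ := Nat.two_mul_ceilDiv_le s hq
  have h₂ := Nat.ceilDiv_pos hq hs
  have h₃ := Nat.ceilDiv_le_self s hq
  rw [laminarBound]
  omega

theorem sum_one_add_laminarBound_le {ι : Type*} (d n : ℕ) (M : Finset ι) (s : ι → ℕ)
    (hpos : ∀ i ∈ M, 0 < s i) (hlt : ∀ i ∈ M, s i < n) (hsum : ∑ i ∈ M, s i ≤ n) :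
    ∑ i ∈ M, (1 + laminarBound d (s i)) ≤ laminarBound (d + 1) n := by
  set T := ∑ i ∈ M, (1 + laminarBound d (s i))
  have hq : 0 < 2 ^ d := Nat.two_pow_pos d
  have hcard : T + #M ≤ 2 * ∑ i ∈ M, s i := by
    rw [card_eq_sum_ones, ← sum_add_distrib, mul_sum]
    refine sum_le_sum fun i hi => ?_
    have := laminarBound_le d (s i)
    have := hpos i hi
    omega
  have hceil : T + (∑ i ∈ M, s i) ⌈/⌉ 2 ^ d ≤ 2 * ∑ i ∈ M, s i := calc
    _ ≤ T + ∑ i ∈ M, s i ⌈/⌉ 2 ^ d := by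
      gcongr
      exact le_sum_of_subadditive (· ⌈/⌉ 2 ^ d) (zero_ceilDiv _).le
        (Nat.ceilDiv_add_le · · _) _ _
    _ = ∑ i ∈ M, (1 + laminarBound d (s i) + s i ⌈/⌉ 2 ^ d) := sum_add_distrib.symm
    _ ≤ ∑ i ∈ M, 2 * s i :=
      sum_le_sum fun i hi => one_add_laminarBound_add_ceilDiv_le d (hpos i hi)
    _ = 2 * ∑ i ∈ M, s i := (mul_sum _ _ _).symm
  have hmono : n ⌈/⌉ 2 ^ d ≤ (∑ i ∈ M, s i) ⌈/⌉ 2 ^ d + (n - ∑ i ∈ M, s i) := by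
    have := Nat.ceilDiv_add_le (∑ i ∈ M, s i) (n - ∑ i ∈ M, s i) (2 ^ d)
    rw [Nat.add_sub_cancel' hsum] at this
    exact this.trans (add_le_add_right (Nat.ceilDiv_le_self _ hq) _)
  have hone : #M = 1 → ∑ i ∈ M, s i < n := fun h => by
    obtain ⟨i, rfl⟩ := card_eq_one.1 h
    simpa using hlt i (mem_singleton_self i)
  have hzero : #M = 0 → T = 0 := fun h => by simp [T, card_eq_zero.1 h]
  rw [laminarBound_succ]
  omega

def IsLaminar {α : Type*} (F : Finset (Finset α)) : Prop :=
  ∀ A ∈ F, ∀ B ∈ F, A ⊆ B ∨ B ⊆ A ∨ Disjoint A B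

namespace IsLaminar

variable {α : Type*} {F G : Finset (Finset α)}

theorem mono (hF : IsLaminar F) (hGF : G ⊆ F) : IsLaminar G :=
  fun A hA B hB => hF A (hGF hA) B (hGF hB)

theorem disjoint_of_maximal (hF : IsLaminar F) {A B : Finset α} (hA : Maximal (· ∈ F) A)
    (hB : Maximal (· ∈ F) B) (hAB : A ≠ B) : Disjoint A B := by
  rcases hF A hA.1 B hB.1 with h | h | h
  · exact absurd (le_antisymm h (hA.2 hB.1 h)) hAB
  · exact absurd (le_antisymm (hB.2 hA.1 h) h) hAB
  · exact h

end IsLaminar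

open Classical in
theorem Finset.card_le_sum_card_filter_le_maximal {β : Type*} [PartialOrder β] (F : Finset β) :
    #F ≤ ∑ M ∈ F with Maximal (· ∈ F) M, #{A ∈ F | A ≤ M} := by
  refine (card_le_card fun A hA => ?_).trans card_biUnion_le
  obtain ⟨M, hAM, hM⟩ := F.exists_le_maximal hA
  exact mem_biUnion.2 ⟨M, mem_filter.2 ⟨hM.1, hM⟩, mem_filter.2 ⟨hA, hAM⟩⟩

theorem card_filter_mem_ssubset_le {α : Type*} [DecidableEq α] {F : Finset (Finset α)}
    {M : Finset α} (hM : M ∈ F) {d : ℕ} (hdepth : ∀ x, #{A ∈ F | x ∈ A} ≤ d + 1) (x : α) :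
    #{A ∈ {A ∈ F | A ⊂ M} | x ∈ A} ≤ d := by
  rw [filter_filter]
  by_cases hx : x ∈ M
  · have hsub : insert M {A ∈ F | A ⊂ M ∧ x ∈ A} ⊆ {A ∈ F | x ∈ A} := by
      refine insert_subset (mem_filter.2 ⟨hM, hx⟩) fun A hA => ?_
      simp only [mem_filter] at hA ⊢
      exact ⟨hA.1, hA.2.2⟩
    have := card_le_card hsub
    rw [card_insert_of_notMem (by simp)] at this
    have := hdepth x
    omega
  · rw [filter_false_of_mem fun A _ hA => hx (hA.1.subset hA.2)]
    simp

theorem IsLaminar.card_le_laminarBound {α : Type*} [DecidableEq α] {d : ℕ} {S : Finset α}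
    {F : Finset (Finset α)} (hF : IsLaminar F) (hsub : ∀ A ∈ F, A ⊂ S)
    (hne : ∀ A ∈ F, A.Nonempty) (hdepth : ∀ x, #{A ∈ F | x ∈ A} ≤ d) :
    #F ≤ laminarBound d #S := by
  induction d generalizing S F with
  | zero =>
    suffices F = ∅ by simp [this]
    refine eq_empty_of_forall_notMem fun A hA => ?_
    obtain ⟨x, hx⟩ := hne A hA
    exact (card_pos.2 ⟨A, mem_filter.2 ⟨hA, hx⟩⟩).ne' (Nat.le_zero.1 (hdepth x))
  | succ d ih =>
    classical
    set Mx := {M ∈ F | Maximal (· ∈ F) M}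
    have hMx : ∀ M ∈ Mx, M ∈ F := fun M hM => (mem_filter.1 hM).1
    have hslice : ∀ M ∈ Mx, #{A ∈ F | A ⊆ M} ≤ 1 + laminarBound d #M := fun M hM => by
      have hinsert : {A ∈ F | A ⊆ M} ⊆ insert M {A ∈ F | A ⊂ M} := fun A hA => by
        rw [mem_insert, mem_filter, ssubset_iff_subset_ne]
        rw [mem_filter] at hA
        tauto
      have hbelow : #{A ∈ F | A ⊂ M} ≤ laminarBound d #M :=
        ih (hF.mono (filter_subset _ _)) (fun A hA => (mem_filter.1 hA).2)
          (fun A hA => hne A (mem_filter.1 hA).1) (card_filter_mem_ssubset_le (hMx M hM) hdepth)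
      have := (card_le_card hinsert).trans (card_insert_le _ _)
      omega
    have hdisj : ∑ M ∈ Mx, #M ≤ #S := by
      rw [← card_biUnion fun M hM N hN hMN =>
        hF.disjoint_of_maximal (mem_filter.1 hM).2 (mem_filter.1 hN).2 hMN]
      exact card_le_card (biUnion_subset.2 fun M hM => (hsub M (hMx M hM)).subset)
    calc #F ≤ ∑ M ∈ Mx, #{A ∈ F | A ⊆ M} := by
          convert F.card_le_sum_card_filter_le_maximal
      _ ≤ ∑ M ∈ Mx, (1 + laminarBound d #M) := sum_le_sum hslice
      _ ≤ laminarBound (d + 1) #S :=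
        sum_one_add_laminarBound_le d #S Mx card (fun M hM => card_pos.2 (hne M (hMx M hM)))
          (fun M hM => card_lt_card (hsub M (hMx M hM))) hdisj

section Seg

variable {V : Type*} [DecidableEq V]

theorem mem_seg_of_idxOf_le {l : List V} {u v w : V} (hw : w ∈ l)
    (huw : l.idxOf u ≤ l.idxOf w) (hwv : l.idxOf w ≤ l.idxOf v) : w ∈ seg l u v := by
  have hwl : l.idxOf w < l.length := List.idxOf_lt_length_of_mem hw
  rw [seg, min_eq_left (huw.trans hwv), max_eq_right (huw.trans hwv), List.mem_iff_getElem]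
  refine ⟨l.idxOf w - l.idxOf u, by simp; omega, ?_⟩
  simp only [List.getElem_take, List.getElem_drop]
  convert List.getElem_idxOf hwl using 2
  omega

theorem seg_subset (l : List V) (u v : V) : seg l u v ⊆ l :=
  fun _ hx => List.mem_of_mem_drop (List.mem_of_mem_take hx)

theorem ConsistentPair.mem_of_mem_seg {l l' : List V} (h : ConsistentPair l l') {u v x : V}
    (hu : u ∈ l) (hv : v ∈ l) (hu' : u ∈ l') (hv' : v ∈ l') (hx : x ∈ seg l u v) :
    x ∈ l' := by
  apply seg_subset l' u v
  rcases h u v hu hv hu' hv' with h | h <;> simpa [h] using hx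

end Seg

theorem List.Nodup.idxOf_eq_length_sub_one {α : Type*} [DecidableEq α] {l : List α} {a : α}
    (hl : l.Nodup) (h : l.getLast? = some a) : l.idxOf a = l.length - 1 := by
  obtain ⟨l', rfl⟩ := List.getLast?_eq_some_iff.1 h
  have ha : a ∉ l' := fun ha =>
    (List.nodup_append.1 hl).2.2 a ha a (List.mem_singleton_self a) rfl
  simp [List.idxOf_append_of_notMem ha]

section Paths

variable {V : Type*} [DecidableEq V] {m : ℕ} {p : Fin m → List V} {r : V}

@[simp]
theorem mem_encoding {v : V} {i : Fin m} : i ∈ encoding p v ↔ v ∈ p i := by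
  simp [encoding]

theorem encoding_eq_univ (hlast : ∀ i, (p i).getLast? = some r) : encoding p r = univ :=
  eq_univ_of_forall fun i => mem_encoding.2 (List.mem_of_getLast? (hlast i))

theorem encoding_subset_of_idxOf_le (hnodup : ∀ i, (p i).Nodup) (hcons : Consistent p)
    (hlast : ∀ i, (p i).getLast? = some r) {i : Fin m} {v w : V} (hv : v ∈ p i)
    (hw : w ∈ p i) (hvw : (p i).idxOf v ≤ (p i).idxOf w) : encoding p v ⊆ encoding p w := by
  intro k hk
  have hr : ∀ j, r ∈ p j := fun j => List.mem_of_getLast? (hlast j)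
  have hwr : (p i).idxOf w ≤ (p i).idxOf r := by
    rw [(hnodup i).idxOf_eq_length_sub_one (hlast i)]
    have := List.idxOf_lt_length_of_mem hw
    omega
  exact mem_encoding.2 <| (hcons i k).mem_of_mem_seg hv (hr i) (mem_encoding.1 hk) (hr k)
    (mem_seg_of_idxOf_le hw hvw hwr)

theorem isLaminar_image_encoding (hnodup : ∀ i, (p i).Nodup) (hcons : Consistent p)
    (hlast : ∀ i, (p i).getLast? = some r) (T : Finset V) :
    IsLaminar (T.image (encoding p)) := by
  simp only [IsLaminar, mem_image]
  rintro _ ⟨v, -, rfl⟩ _ ⟨w, -, rfl⟩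
  by_cases hd : Disjoint (encoding p v) (encoding p w)
  · exact .inr (.inr hd)
  obtain ⟨i, hiv, hiw⟩ := not_disjoint_iff.1 hd
  have hv := mem_encoding.1 hiv
  have hw := mem_encoding.1 hiw
  rcases le_total ((p i).idxOf v) ((p i).idxOf w) with h | h
  · exact .inl (encoding_subset_of_idxOf_le hnodup hcons hlast hv hw h)
  · exact .inr (.inl (encoding_subset_of_idxOf_le hnodup hcons hlast hw hv h))

theorem card_filter_mem_erase_univ_le (hlast : ∀ i, (p i).getLast? = some r) (T : Finset V)
    (i : Fin m) : #{A ∈ (T.image (encoding p)).erase univ | i ∈ A} ≤ (p i).length - 1 := by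
  have hr : r ∈ (p i).toFinset := List.mem_toFinset.2 (List.mem_of_getLast? (hlast i))
  have hsub : {A ∈ (T.image (encoding p)).erase univ | i ∈ A} ⊆
      ((p i).toFinset.erase r).image (encoding p) := by
    intro A hA
    simp only [mem_filter, mem_erase, mem_image] at hA
    obtain ⟨⟨hA, v, -, rfl⟩, hi⟩ := hA
    refine mem_image.2 ⟨v, mem_erase.2 ⟨fun hvr => hA ?_, ?_⟩, rfl⟩
    · rw [hvr, encoding_eq_univ hlast]
    · exact List.mem_toFinset.2 (mem_encoding.1 hi)
  calc _ ≤ #(((p i).toFinset.erase r).image (encoding p)) := card_le_card hsub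
    _ ≤ #((p i).toFinset.erase r) := card_image_le
    _ = #(p i).toFinset - 1 := card_erase_of_mem hr
    _ ≤ (p i).length - 1 := Nat.sub_le_sub_right (List.toFinset_card_le _) 1

end Paths

theorem ncard_identifiable_le_one_add_laminarBound {V : Type*} [Fintype V] [DecidableEq V]
    {m : ℕ} (p : Fin m → List V) (r : V) (dmax : ℕ) (hnodup : ∀ i, (p i).Nodup)
    (hcons : Consistent p) (hlast : ∀ i, (p i).getLast? = some r)
    (hlen : ∀ i, (p i).length ≤ dmax) :
    {v : V | Identifiable p v}.ncard ≤ 1 + laminarBound (dmax - 1) m := by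
  classical
  set I : Finset V := {v | Identifiable p v}
  set F := I.image (encoding p)
  have hI : {v : V | Identifiable p v}.ncard = #F := by
    rw [card_image_of_injOn fun v hv w _ hvw => by_contra fun hne => ?_]
    · rw [← Set.ncard_coe_finset]; simp [I]
    · exact (mem_filter.1 hv).2.2 w (Ne.symm hne) hvw.symm
  have hF : #F ≤ 1 + #(F.erase univ) := by
    have := pred_card_le_card_erase (a := univ) (s := F)
    omega
  have hdepth : ∀ i, #{A ∈ F.erase univ | i ∈ A} ≤ dmax - 1 := fun i =>
    (card_filter_mem_erase_univ_le hlast I i).trans (Nat.sub_le_sub_right (hlen i) 1)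
  have hne : ∀ A ∈ F.erase univ, A.Nonempty := fun A hA => by
    obtain ⟨v, hv, rfl⟩ := mem_image.1 (mem_of_mem_erase hA)
    exact nonempty_iff_ne_empty.2 (mem_filter.1 hv).2.1
  have hlam : #(F.erase univ) ≤ laminarBound (dmax - 1) #(univ : Finset (Fin m)) :=
    ((isLaminar_image_encoding hnodup hcons hlast I).mono (erase_subset _ _)).card_le_laminarBound
      (fun A hA => ssubset_univ_iff.2 (mem_erase.1 hA).1) hne hdepth
  rw [card_univ, Fintype.card_fin] at hlam
  omega

/-- Identifiability for single-server monitoring (Theorem V.4): for `m` consistent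
monitoring paths with common final node `r`, each of length at most `d_max`,
on `n` nodes:
* if `d_max ≥ ⌈log₂ m⌉ + 1` the number of identifiable nodes is at most
  `min (2m − 1) n`;
* if `2 ≤ d_max < ⌈log₂ m⌉ + 1` it is at most
  `min n (1 + ⌊m / 2^(d_max−2)⌋·z(2^(d_max−2)) + z(m mod 2^(d_max−2)))`. -/
theorem identifiable_le_single_server {V : Type*} [Fintype V] [DecidableEq V]
    {m : ℕ} (p : Fin m → List V) (r : V) (dmax : ℕ)
    (hnodup : ∀ i, (p i).Nodup) (hcons : Consistent p)
    (hlast : ∀ i, (p i).getLast? = some r) (hlen : ∀ i, (p i).length ≤ dmax) :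
    (Nat.clog 2 m + 1 ≤ dmax →
      {v : V | Identifiable p v}.ncard ≤ min (z m) (Fintype.card V)) ∧
    (2 ≤ dmax → dmax < Nat.clog 2 m + 1 →
      {v : V | Identifiable p v}.ncard ≤
        min (Fintype.card V)
          (1 + (m / 2 ^ (dmax - 2)) * z (2 ^ (dmax - 2)) + z (m % 2 ^ (dmax - 2)))) := by
  have hmain := ncard_identifiable_le_one_add_laminarBound p r dmax hnodup hcons hlast hlen
  have hcard : {v : V | Identifiable p v}.ncard ≤ Fintype.card V := by
    simpa using Set.ncard_le_card {v : V | Identifiable p v}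
  refine ⟨fun _ => le_min ?_ hcard, fun hd _ => le_min hcard ?_⟩
  · rcases Nat.eq_zero_or_pos m with rfl | hm
    · simp [Identifiable, eq_empty_of_isEmpty]
    · have := laminarBound_le (dmax - 1) m
      rw [z]
      omega
  · obtain ⟨k, rfl⟩ : ∃ k, dmax = k + 2 := ⟨dmax - 2, by omega⟩
    rw [show k + 2 - 1 = k + 1 by omega, laminarBound_succ] at hmain
    rw [Nat.add_sub_cancel, add_assoc, div_mul_z_add_z_mod m (Nat.two_pow_pos k)]
    omega
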